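/- arXiv:1207.5270 — 6 statements merged into one kernel-verified Lean document; each statement's English description precedes it below -/
import Mathlib

section
/- Let X and Y be independent absolutely continuous real-valued random variables, each symmetrically distributed about θ, with cdfs F_X and G_Y and supports (θ − a, θ + a) and (θ − b, θ + b) respectively, where 0 < a ≤ b ≤ ∞. If P(X − θ ≤ t) ≥ P(Y − θ ≤ t) for all t ≥ 0, then P(|X − θ| < |Y − θ|) ≥ 2(G_Y(θ + a) − 1)^2 + 1/2 ≥ 1/2; in particular, X is Pitman closer to θ than Y. -/
/-!
Write `U = |X - θ|` and `V = |Y - θ|`. By symmetry `P(V ≤ s) = 2 G(θ + s) - 1` for `s ≥ 0`, and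
likewise for `U`, where `P(U < s) = P(U ≤ s)` because `X` has no atoms; so the hypothesis says
`P(V ≤ s) ≤ P(U < s)`. Integrating over `V` and using `U < a` almost surely,
`P(U < V) ≥ P(V ≥ a) + P(V' ≤ V < a)` for an independent copy `V'` of `V`, and the last term is
at least `p² / 2` with `p = P(V < a)`, since `V' ≤ V` or `V ≤ V'`. Finally
`p ≤ 2 G(θ + a) - 1`, and `1 - p + p² / 2` is decreasing in `p ≤ 1`.
-/

open MeasureTheory ProbabilityTheory Set

def IsSymmAbout (ρ : Measure ℝ) (θ : ℝ) : Prop :=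
  ρ.map (· - θ) = ρ.map (θ - ·)

namespace IsSymmAbout

variable {ρ : Measure ℝ} {θ : ℝ}

lemma measure_Iio_sub_eq_measure_Ioi_add (h : IsSymmAbout ρ θ) (s : ℝ) :
    ρ (Iio (θ - s)) = ρ (Ioi (θ + s)) := by
  have := congrArg (· (Iio (-s))) h
  simp only [Measure.map_apply (by fun_prop : Measurable (· - θ)) measurableSet_Iio,
    Measure.map_apply (by fun_prop : Measurable (θ - ·)) measurableSet_Iio] at this
  convert this using 2 <;> ext x <;> simp only [mem_Iio, mem_Ioi, mem_preimage] <;>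
    constructor <;> intro <;> linarith

lemma measureReal_abs_sub_le [IsProbabilityMeasure ρ] (h : IsSymmAbout ρ θ) {s : ℝ} (hs : 0 ≤ s) :
    ρ.real {w | |w - θ| ≤ s} = 2 * cdf ρ (θ + s) - 1 := by
  have hset : {w : ℝ | |w - θ| ≤ s} = Iic (θ + s) \ Iio (θ - s) := by
    ext w; simp only [mem_ofPred_eq, abs_le, mem_sdiff, mem_Iic, mem_Iio, not_lt]
    constructor <;> rintro ⟨h₁, h₂⟩ <;> constructor <;> linarith
  have hsub : Iio (θ - s) ⊆ Iic (θ + s) := fun w hw => by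
    simp only [mem_Iio, mem_Iic] at hw ⊢; linarith
  rw [hset, measureReal_sdiff hsub measurableSet_Iio, measureReal_def (s := Iio _),
    h.measure_Iio_sub_eq_measure_Ioi_add, ← measureReal_def, ← compl_Iic,
    probReal_compl_eq_one_sub measurableSet_Iic, cdf_eq_real]
  ring

lemma measureReal_abs_sub_lt_le [IsProbabilityMeasure ρ] (h : IsSymmAbout ρ θ) {a : EReal}
    (ha : 0 ≤ a) :
    ρ.real {w | ((|w - θ| : ℝ) : EReal) < a} ≤ 2 * ρ.real {w | (w : EReal) ≤ θ + a} - 1 := by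
  induction a using EReal.rec with
  | bot => exact absurd ha (not_le.2 EReal.bot_lt_zero)
  | top =>
    simp only [EReal.coe_lt_top, ofPred_true, EReal.coe_add_top, le_top, probReal_univ]
    norm_num
  | coe a =>
    have hset : {w : ℝ | (w : EReal) ≤ θ + a} = Iic (θ + a) := by
      ext w; simp only [mem_ofPred_eq, mem_Iic, ← EReal.coe_add, EReal.coe_le_coe_iff]
    simp only [EReal.coe_lt_coe_iff, hset, ← cdf_eq_real]
    rw [← h.measureReal_abs_sub_le (EReal.coe_nonneg.1 ha)]
    exact measureReal_mono fun w (hw : |w - θ| < a) => hw.le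

end IsSymmAbout

lemma measure_abs_sub_lt_eq_le (ν : Measure ℝ) [NullSingletonClass ν] (θ s : ℝ) :
    ν {u | |u - θ| < s} = ν {u | |u - θ| ≤ s} := by
  change ν (Metric.ball θ s) = ν (Metric.closedBall θ s)
  rw [Real.ball_eq_Ioo, Real.closedBall_eq_Icc]
  exact measure_congr Ioo_ae_eq_Icc

lemma measure_abs_sub_le_le_measure_abs_sub_lt {ν ρ : Measure ℝ} [IsProbabilityMeasure ν]
    [IsProbabilityMeasure ρ] [NullSingletonClass ν] {θ : ℝ} (hν : IsSymmAbout ν θ)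
    (hρ : IsSymmAbout ρ θ)
    (hcdf : ∀ s, 0 ≤ s → cdf ρ (θ + s) ≤ cdf ν (θ + s)) (s : ℝ) :
    ρ {w | |w - θ| ≤ s} ≤ ν {u | |u - θ| < s} := by
  rcases lt_or_ge s 0 with hs | hs
  · have hempty : {w : ℝ | |w - θ| ≤ s} = ∅ :=
      eq_empty_of_forall_notMem fun w (hw : |w - θ| ≤ s) => (abs_nonneg _).not_gt (hw.trans_lt hs)
    simp [hempty]
  · rw [measure_abs_sub_lt_eq_le, ← ENNReal.toReal_le_toReal (by finiteness) (by finiteness)]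
    change ρ.real _ ≤ ν.real _
    rw [hρ.measureReal_abs_sub_le hs, hν.measureReal_abs_sub_le hs]
    linarith [hcdf s hs]

lemma sq_measure_univ_le_two_mul_lintegral_measure_Iic (m : Measure ℝ) [SFinite m] :
    m univ ^ 2 ≤ 2 * ∫⁻ x, m (Iic x) ∂m := by
  have hle : (m.prod m) {p | p.2 ≤ p.1} = ∫⁻ x, m (Iic x) ∂m :=
    Measure.prod_apply (measurableSet_le measurable_snd measurable_fst)
  have hge : (m.prod m) {p | p.1 ≤ p.2} = ∫⁻ x, m (Iic x) ∂m :=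
    Measure.prod_apply_symm (measurableSet_le measurable_fst measurable_snd)
  calc m univ ^ 2 = (m.prod m) univ := by rw [← univ_prod_univ, Measure.prod_prod, sq]
    _ ≤ (m.prod m) ({p | p.2 ≤ p.1} ∪ {p | p.1 ≤ p.2}) := measure_mono fun p _ => le_total p.2 p.1
    _ ≤ (m.prod m) {p | p.2 ≤ p.1} + (m.prod m) {p | p.1 ≤ p.2} := measure_union_le _ _
    _ = 2 * ∫⁻ x, m (Iic x) ∂m := by rw [hle, hge, two_mul]

lemma sq_measure_le_two_mul_setLIntegral_measure_Iic (ρ : Measure ℝ) [SFinite ρ] (S : Set ℝ) :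
    ρ S ^ 2 ≤ 2 * ∫⁻ x in S, ρ (Iic x) ∂ρ :=
  calc ρ S ^ 2 = ρ.restrict S univ ^ 2 := by rw [Measure.restrict_apply_univ]
    _ ≤ 2 * ∫⁻ x in S, ρ.restrict S (Iic x) ∂ρ := sq_measure_univ_le_two_mul_lintegral_measure_Iic _
    _ ≤ 2 * ∫⁻ x in S, ρ (Iic x) ∂ρ := by
      gcongr 2 * ?_
      exact lintegral_mono fun _ => Measure.restrict_le_self _

theorem one_sub_add_sq_div_two_le_measureReal_prod_lt {ν ρ : Measure ℝ} [IsProbabilityMeasure ν]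
    [IsProbabilityMeasure ρ] {S : Set ℝ} (hS : IsLowerSet S) (hνS : ∀ᵐ u ∂ν, u ∈ S)
    (hdom : ∀ s ∈ S, ρ (Iic s) ≤ ν (Iio s)) :
    1 - ρ.real S + ρ.real S ^ 2 / 2 ≤ (ν.prod ρ).real {p | p.1 < p.2} := by
  have hSm : MeasurableSet S := hS.ordConnected.measurableSet
  have hoff : ∀ v ∈ Sᶜ, 1 ≤ ν (Iio v) := fun v hv =>
    calc 1 = ν S := ((mem_ae_iff_prob_eq_one hSm).1 hνS).symm
      _ ≤ ν (Iio v) := measure_mono fun u hu => lt_of_not_ge fun hvu => hv (hS hvu hu)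
  have hprod : (ν.prod ρ) {p | p.1 < p.2} = ∫⁻ v, ν (Iio v) ∂ρ :=
    Measure.prod_apply_symm (measurableSet_lt measurable_fst measurable_snd)
  have key : ρ S ^ 2 + 2 * ρ Sᶜ ≤ 2 * (ν.prod ρ) {p | p.1 < p.2} :=
    calc ρ S ^ 2 + 2 * ρ Sᶜ ≤ 2 * ∫⁻ v in S, ρ (Iic v) ∂ρ + 2 * ∫⁻ _ in Sᶜ, 1 ∂ρ := by
          rw [setLIntegral_one]; gcongr; exact sq_measure_le_two_mul_setLIntegral_measure_Iic ρ S
      _ ≤ 2 * ∫⁻ v in S, ν (Iio v) ∂ρ + 2 * ∫⁻ v in Sᶜ, ν (Iio v) ∂ρ := by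
          gcongr 2 * ?_ + 2 * ?_
          · exact setLIntegral_mono' hSm hdom
          · exact setLIntegral_mono' hSm.compl hoff
      _ = 2 * (ν.prod ρ) {p | p.1 < p.2} := by rw [← mul_add, lintegral_add_compl _ hSm, hprod]
  have key' := ENNReal.toReal_mono (by finiteness) key
  rw [ENNReal.toReal_add (by finiteness) (by finiteness), ENNReal.toReal_mul, ENNReal.toReal_mul,
    ENNReal.toReal_pow, ← measureReal_def, ← measureReal_def, ← measureReal_def,
    probReal_compl_eq_one_sub hSm] at key'
  norm_num at key'
  linarith

lemma ProbabilityTheory.IndepFun.measure_lt_eq_map_prod_map {Ω : Type*} [MeasurableSpace Ω]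
    {μ : Measure Ω} [IsFiniteMeasure μ] {U V : Ω → ℝ} (hU : AEMeasurable U μ)
    (hV : AEMeasurable V μ) (h : IndepFun U V μ) :
    μ {ω | U ω < V ω} = ((μ.map U).prod (μ.map V)) {p | p.1 < p.2} := by
  rw [← (indepFun_iff_map_prod_eq_prod_map_map hU hV).1 h,
    Measure.map_apply_of_aemeasurable (hU.prodMk hV)
      (measurableSet_lt measurable_fst measurable_snd)]
  rfl

section RandomVariables

variable {Ω : Type*} [MeasurableSpace Ω] {μ : Measure Ω} {X Y : Ω → ℝ} {θ : ℝ}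

lemma isSymmAbout_map (hX : Measurable X)
    (h : μ.map (fun ω => X ω - θ) = μ.map (fun ω => θ - X ω)) : IsSymmAbout (μ.map X) θ := by
  rwa [IsSymmAbout, Measure.map_map (by fun_prop) hX, Measure.map_map (by fun_prop) hX]

theorem one_sub_add_sq_div_two_le_measureReal_abs_sub_lt [IsProbabilityMeasure μ]
    (hX : Measurable X) (hY : Measurable Y) (hindep : IndepFun X Y μ)
    (hXsym : IsSymmAbout (μ.map X) θ) (hYsym : IsSymmAbout (μ.map Y) θ)
    [NullSingletonClass (μ.map X)]
    (hcdf : ∀ s, 0 ≤ s → cdf (μ.map Y) (θ + s) ≤ cdf (μ.map X) (θ + s))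
    {S : Set ℝ} (hS : IsLowerSet S) (hXS : ∀ᵐ ω ∂μ, |X ω - θ| ∈ S) :
    1 - μ.real {ω | |Y ω - θ| ∈ S} + μ.real {ω | |Y ω - θ| ∈ S} ^ 2 / 2
      ≤ μ.real {ω | |X ω - θ| < |Y ω - θ|} := by
  have : IsProbabilityMeasure (μ.map X) := Measure.isProbabilityMeasure_map hX.aemeasurable
  have : IsProbabilityMeasure (μ.map Y) := Measure.isProbabilityMeasure_map hY.aemeasurable
  set d : ℝ → ℝ := fun x => |x - θ|
  have hd : Measurable d := by fun_prop
  have hSm : MeasurableSet S := hS.ordConnected.measurableSet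
  have hdom : ∀ s ∈ S, μ.map (d ∘ Y) (Iic s) ≤ μ.map (d ∘ X) (Iio s) := fun s _ => by
    rw [← Measure.map_map hd hX, ← Measure.map_map hd hY, Measure.map_apply hd measurableSet_Iic,
      Measure.map_apply hd measurableSet_Iio]
    exact measure_abs_sub_le_le_measure_abs_sub_lt hXsym hYsym hcdf s
  have : IsProbabilityMeasure (μ.map (d ∘ X)) := Measure.isProbabilityMeasure_map (by fun_prop)
  have : IsProbabilityMeasure (μ.map (d ∘ Y)) := Measure.isProbabilityMeasure_map (by fun_prop)
  have hlower := one_sub_add_sq_div_two_le_measureReal_prod_lt hS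
    ((ae_map_iff (hd.comp hX).aemeasurable hSm).2 hXS) hdom
  rwa [map_measureReal_apply (hd.comp hY) hSm, measureReal_def, measureReal_def,
    ← (hindep.comp hd hd).measure_lt_eq_map_prod_map (hd.comp hX).aemeasurable
      (hd.comp hY).aemeasurable] at hlower

end RandomVariables

theorem pitman_closer_of_stochastic_comparison_general
    {Ω : Type*} [MeasurableSpace Ω] (μ : Measure Ω) [IsProbabilityMeasure μ]
    (X Y : Ω → ℝ) (hXmeas : Measurable X) (hYmeas : Measurable Y)
    (hindep : IndepFun X Y μ) (θ : ℝ)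
    -- `X` and `Y` are symmetrically distributed about `θ`
    (hXsym : Measure.map (fun ω => X ω - θ) μ = Measure.map (fun ω => θ - X ω) μ)
    (hYsym : Measure.map (fun ω => Y ω - θ) μ = Measure.map (fun ω => θ - Y ω) μ)
    -- absolute continuity, with cdfs `F` and `G`
    (hXac : HasPDF X μ)
    (F G : ℝ → ℝ)
    (hF : ∀ t, F t = (μ {ω | X ω ≤ t}).toReal)
    (hG : ∀ t, G t = (μ {ω | Y ω ≤ t}).toReal)
    -- supports `(θ - a, θ + a)` and `(θ - b, θ + b)` with `0 < a ≤ b ≤ ∞`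
    (a : EReal) (ha : (0 : EReal) < a)
    (hsuppX : ∀ᵐ ω ∂μ, ((|X ω - θ| : ℝ) : EReal) < a)
    -- stochastic comparison: `P(X - θ ≤ t) ≥ P(Y - θ ≤ t)` for all `t ≥ 0`
    (hcomp : ∀ t : ℝ, 0 ≤ t → F (θ + t) ≥ G (θ + t)) :
    (μ {ω | |X ω - θ| < |Y ω - θ|}).toReal
        ≥ 2 * ((μ {ω | ((Y ω : ℝ) : EReal) ≤ (θ : ℝ) + a}).toReal - 1) ^ 2 + 1 / 2
      ∧ 2 * ((μ {ω | ((Y ω : ℝ) : EReal) ≤ (θ : ℝ) + a}).toReal - 1) ^ 2 + 1 / 2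
          ≥ 1 / 2
      ∧ (μ {ω | |X ω - θ| < |Y ω - θ|}).toReal ≥ 1 / 2 := by
  have : IsProbabilityMeasure (μ.map X) := Measure.isProbabilityMeasure_map hXmeas.aemeasurable
  have : IsProbabilityMeasure (μ.map Y) := Measure.isProbabilityMeasure_map hYmeas.aemeasurable
  have : NullSingletonClass (μ.map X) :=
    ⟨fun _ => hXac.absolutelyContinuous Real.volume_singleton⟩
  have hcdf (s : ℝ) (hs : 0 ≤ s) : cdf (μ.map Y) (θ + s) ≤ cdf (μ.map X) (θ + s) := by
    rw [cdf_eq_real, cdf_eq_real, map_measureReal_apply hYmeas measurableSet_Iic,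
      map_measureReal_apply hXmeas measurableSet_Iic]
    have h := hcomp s hs
    rwa [hF, hG] at h
  set S : Set ℝ := {v | (v : EReal) < a}
  have hS : IsLowerSet S := fun _ _ hxy hx => (EReal.coe_le_coe_iff.2 hxy).trans_lt hx
  have hlower := one_sub_add_sq_div_two_le_measureReal_abs_sub_lt hXmeas hYmeas hindep
    (isSymmAbout_map hXmeas hXsym) (isSymmAbout_map hYmeas hYsym) hcdf hS hsuppX
  set c := (μ {ω | ((Y ω : ℝ) : EReal) ≤ (θ : ℝ) + a}).toReal
  have hSc : μ.real {ω | |Y ω - θ| ∈ S} ≤ 2 * c - 1 := by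
    have := (isSymmAbout_map hYmeas hYsym).measureReal_abs_sub_lt_le ha.le
    rwa [map_measureReal_apply hYmeas (measurableSet_lt (by fun_prop) measurable_const),
      map_measureReal_apply hYmeas (measurableSet_le measurable_coe_real_ereal measurable_const)]
      at this
  have hc : c ≤ 1 := measureReal_le_one
  have hp : 0 ≤ μ.real {ω | |Y ω - θ| ∈ S} := measureReal_nonneg
  rw [← measureReal_def]
  refine ⟨by nlinarith, by nlinarith [sq_nonneg (c - 1)], by nlinarith [sq_nonneg (c - 1)]⟩

/-- Lemma 2 and its proof.  Let `X` and `Y` be independent absolutely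
continuous real random variables, each symmetric about `θ`, with cdfs `F` and `G` and
supports `(θ - a, θ + a)` and `(θ - b, θ + b)` where `0 < a ≤ b ≤ ∞`.  If
`P(X - θ ≤ t) ≥ P(Y - θ ≤ t)` for all `t ≥ 0` then
`P(|X - θ| < |Y - θ|) ≥ 2 (G_Y(θ + a) - 1)² + 1/2 ≥ 1/2`; in particular `X` is Pitman
closer to `θ` than `Y`.  (Here `G_Y(θ + a)` is written as `P(Y ≤ θ + a)` computed in
`EReal`, to allow `a = ∞`.) -/
theorem pitman_closer_of_stochastic_comparison
    {Ω : Type*} [MeasurableSpace Ω] (μ : Measure Ω) [IsProbabilityMeasure μ]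
    (X Y : Ω → ℝ) (hXmeas : Measurable X) (hYmeas : Measurable Y)
    (hindep : IndepFun X Y μ) (θ : ℝ)
    -- `X` and `Y` are symmetrically distributed about `θ`
    (hXsym : Measure.map (fun ω => X ω - θ) μ = Measure.map (fun ω => θ - X ω) μ)
    (hYsym : Measure.map (fun ω => Y ω - θ) μ = Measure.map (fun ω => θ - Y ω) μ)
    -- absolute continuity, with cdfs `F` and `G`
    (hXac : HasPDF X μ) (hYac : HasPDF Y μ)
    (F G : ℝ → ℝ)
    (hF : ∀ t, F t = (μ {ω | X ω ≤ t}).toReal)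
    (hG : ∀ t, G t = (μ {ω | Y ω ≤ t}).toReal)
    -- supports `(θ - a, θ + a)` and `(θ - b, θ + b)` with `0 < a ≤ b ≤ ∞`
    (a b : EReal) (ha : (0 : EReal) < a) (hab : a ≤ b)
    (hsuppX : ∀ᵐ ω ∂μ, ((|X ω - θ| : ℝ) : EReal) < a)
    (hsuppY : ∀ᵐ ω ∂μ, ((|Y ω - θ| : ℝ) : EReal) < b)
    -- stochastic comparison: `P(X - θ ≤ t) ≥ P(Y - θ ≤ t)` for all `t ≥ 0`
    (hcomp : ∀ t : ℝ, 0 ≤ t → F (θ + t) ≥ G (θ + t)) :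
    (μ {ω | |X ω - θ| < |Y ω - θ|}).toReal
        ≥ 2 * ((μ {ω | ((Y ω : ℝ) : EReal) ≤ (θ : ℝ) + a}).toReal - 1) ^ 2 + 1 / 2
      ∧ 2 * ((μ {ω | ((Y ω : ℝ) : EReal) ≤ (θ : ℝ) + a}).toReal - 1) ^ 2 + 1 / 2
          ≥ 1 / 2
      ∧ (μ {ω | |X ω - θ| < |Y ω - θ|}).toReal ≥ 1 / 2 :=
  pitman_closer_of_stochastic_comparison_general μ X Y hXmeas hYmeas hindep θ hXsym hYsym hXac F G
    hF hG a ha hsuppX hcomp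
end

section
/- Let X and Y be independent absolutely continuous real-valued random variables, each symmetrically distributed about θ, with the support of X contained in the support of Y. If X is more peaked about θ than Y, i.e., P(|X − θ| ≤ t) ≥ P(|Y − θ| ≤ t) for all t ≥ 0, then X is Pitman closer to θ than Y, i.e., P(|X − θ| < |Y − θ|) ≥ 1/2. -/
/-!
Put `A = |X - θ|` and `B = |Y - θ|`. By independence and Fubini,
`P(A < B) = ∫ P(A < b) dP_B(b)`. Peakedness, passed to left limits, gives `P(A < b) ≥ P(B < b)`,
so `P(A < B) ≥ P(B' < B)` for an independent copy `B'` of `B`; this is `1/2` because the pair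
`(B', B)` is exchangeable and, `B` being atomless, `P(B' = B) = 0`.
-/

open MeasureTheory ProbabilityTheory
open scoped ENNReal

/-- The (topological) support of a measure on `ℝ`: the set of points all of whose
neighbourhoods have positive measure. -/
def measureSupport (ν : MeasureTheory.Measure ℝ) : Set ℝ :=
  {x | ∀ U ∈ nhds x, ν U ≠ 0}

open Set

lemma measure_Iio_le_of_forall_lt_measure_Iic_le {ν ν' : Measure ℝ} {b : ℝ}
    (h : ∀ t < b, ν (Iic t) ≤ ν' (Iic t)) : ν (Iio b) ≤ ν' (Iio b) := by
  obtain ⟨u, hu_mono, hu_mem, hu_lim⟩ := exists_seq_strictMono_tendsto' (sub_one_lt b)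
  have hu_lt : ∀ n, u n < b := fun n => (hu_mem n).2
  have hIic_mono : Monotone fun n => Iic (u n) := fun _ _ hmn =>
    Iic_subset_Iic.2 (hu_mono.monotone hmn)
  rw [← iUnion_Iic_eq_Iio_of_lt_of_tendsto hu_lt hu_lim, hIic_mono.measure_iUnion,
    hIic_mono.measure_iUnion]
  exact iSup_mono fun n => h _ (hu_lt n)

section

variable {α : Type*} [LinearOrder α] [TopologicalSpace α] [OrderClosedTopology α]
  [SecondCountableTopology α] [MeasurableSpace α] [OpensMeasurableSpace α]

lemma prod_setOf_fst_lt_snd_le_of_measure_Iio_le {ν ν' ρ : Measure α}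
    [SFinite ν] [SFinite ν'] [SFinite ρ]
    (h : ∀ b, ν (Iio b) ≤ ν' (Iio b)) :
    ν.prod ρ {p | p.1 < p.2} ≤ ν'.prod ρ {p | p.1 < p.2} := by
  rw [Measure.prod_apply_symm measurableSet_lt', Measure.prod_apply_symm measurableSet_lt']
  exact lintegral_mono fun b => h b

lemma prod_self_diagonal_eq_zero (ν : Measure α) [SFinite ν] [NullSingletonClass ν] :
    ν.prod ν (diagonal α) = 0 := by
  rw [Measure.prod_apply measurableSet_diagonal]
  simp [preimage, diagonal]

lemma prod_self_setOf_fst_lt_snd_eq_half (ν : Measure α) [IsProbabilityMeasure ν]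
    [NullSingletonClass ν] :
    ν.prod ν {p | p.1 < p.2} = 2⁻¹ := by
  have hswap : ν.prod ν {p | p.2 < p.1} = ν.prod ν {p | p.1 < p.2} := by
    change ν.prod ν (Prod.swap ⁻¹' {p | p.1 < p.2}) = _
    rw [← Measure.map_apply measurable_swap measurableSet_lt', Measure.prod_swap]
  have hunion : {p : α × α | p.1 < p.2} ∪ {p | p.2 < p.1} = (diagonal α)ᶜ := by
    ext p; simp [lt_or_lt_iff_ne]
  have hsum : ν.prod ν {p | p.1 < p.2} + ν.prod ν {p | p.2 < p.1} = 1 := by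
    have hdisj : Disjoint {p : α × α | p.1 < p.2} {p | p.2 < p.1} :=
      disjoint_left.2 fun _ h1 h2 => lt_asymm h1 h2
    rw [← measure_union hdisj (measurableSet_lt measurable_snd measurable_fst), hunion,
      measure_compl measurableSet_diagonal (measure_ne_top _ _), prod_self_diagonal_eq_zero,
      measure_univ, tsub_zero]
  rw [hswap, ← two_mul] at hsum
  exact ENNReal.eq_inv_of_mul_eq_one_left (by rwa [mul_comm])

lemma IndepFun.measure_setOf_lt {Ω : Type*} [MeasurableSpace Ω] {μ : Measure Ω}
    [IsFiniteMeasure μ] {f g : Ω → α} (hf : Measurable f) (hg : Measurable g) (hfg : IndepFun f g μ) :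
    μ {ω | f ω < g ω} = (μ.map f).prod (μ.map g) {p | p.1 < p.2} := by
  rw [← (indepFun_iff_map_prod_eq_prod_map_map hf.aemeasurable hg.aemeasurable).1 hfg,
    Measure.map_apply (hf.prodMk hg) measurableSet_lt']
  rfl

end

lemma Measure.AbsolutelyContinuous.nullSingletonClass {α : Type*} [MeasurableSpace α]
    {ν ν' : Measure α} [NullSingletonClass ν'] (h : ν ≪ ν') : NullSingletonClass ν :=
  ⟨fun x => h (measure_singleton x)⟩

lemma nullSingletonClass_map_abs_sub {ν : Measure ℝ} [NullSingletonClass ν] (θ : ℝ) :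
    NullSingletonClass (ν.map fun y => |y - θ|) where
  measure_singleton b := by
    rw [Measure.map_apply (by fun_prop) (measurableSet_singleton b)]
    refine ((toFinite {θ + b, θ - b}).subset fun y (hy : |y - θ| = b) => ?_).measure_zero ν
    rcases (abs_eq (hy ▸ abs_nonneg _)).1 hy with h | h
    · left; linarith
    · right; simp only [mem_singleton_iff]; linarith

theorem pitman_closer_of_more_peaked_general
    {Ω : Type*} [MeasurableSpace Ω] (μ : Measure Ω) [IsProbabilityMeasure μ]
    (X Y : Ω → ℝ) (hXmeas : Measurable X) (hYmeas : Measurable Y)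
    (hindep : IndepFun X Y μ) (θ : ℝ)
    (hYac : HasPDF Y μ)
    -- `X` is more peaked about `θ` than `Y`
    (hpeak : ∀ t : ℝ, 0 ≤ t → μ {ω | |X ω - θ| ≤ t} ≥ μ {ω | |Y ω - θ| ≤ t}) :
    (μ {ω | |X ω - θ| < |Y ω - θ|}).toReal ≥ 1 / 2 := by
  have hA : Measurable fun ω => |X ω - θ| := by fun_prop
  have hB : Measurable fun ω => |Y ω - θ| := by fun_prop
  have : IsProbabilityMeasure (μ.map fun ω => |Y ω - θ|) :=
    Measure.isProbabilityMeasure_map hB.aemeasurable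
  have : NullSingletonClass (μ.map Y) :=
    Measure.AbsolutelyContinuous.nullSingletonClass (HasPDF.absolutelyContinuous (μ := volume))
  have : NullSingletonClass (μ.map fun ω => |Y ω - θ|) := by
    have := nullSingletonClass_map_abs_sub (ν := μ.map Y) θ
    rwa [Measure.map_map (by fun_prop) hYmeas] at this
  have hIic (t : ℝ) :
      μ.map (fun ω => |Y ω - θ|) (Iic t) ≤ μ.map (fun ω => |X ω - θ|) (Iic t) := by
    rw [Measure.map_apply hB measurableSet_Iic, Measure.map_apply hA measurableSet_Iic]
    rcases le_or_gt 0 t with ht | ht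
    · exact hpeak t ht
    · have hempty : (fun ω => |Y ω - θ|) ⁻¹' Iic t = ∅ :=
        eq_empty_of_forall_notMem fun ω hω => ht.not_ge ((abs_nonneg _).trans hω)
      simp [hempty]
  have hhalf : 2⁻¹ ≤ μ {ω | |X ω - θ| < |Y ω - θ|} := calc
    2⁻¹ = (μ.map fun ω => |Y ω - θ|).prod (μ.map fun ω => |Y ω - θ|) {p | p.1 < p.2} :=
      (prod_self_setOf_fst_lt_snd_eq_half _).symm
    _ ≤ (μ.map fun ω => |X ω - θ|).prod (μ.map fun ω => |Y ω - θ|) {p | p.1 < p.2} :=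
      prod_setOf_fst_lt_snd_le_of_measure_Iio_le fun _ =>
        measure_Iio_le_of_forall_lt_measure_Iic_le fun t _ => hIic t
    _ = μ {ω | |X ω - θ| < |Y ω - θ|} :=
      (IndepFun.measure_setOf_lt hA hB
        (hindep.comp (φ := fun x => |x - θ|) (ψ := fun x => |x - θ|) (by fun_prop)
          (by fun_prop))).symm
  simpa using ENNReal.toReal_mono (measure_ne_top _ _) hhalf

/-- Lemma 4.  Let `X` and `Y` be independent absolutely continuous
real random variables, each symmetric about `θ`, with the support of `X` contained in
the support of `Y`.  If `X` is more peaked about `θ` than `Y`, i.e.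
`P(|X - θ| ≤ t) ≥ P(|Y - θ| ≤ t)` for all `t ≥ 0`, then `X` is Pitman closer to `θ`
than `Y`, i.e. `P(|X - θ| < |Y - θ|) ≥ 1/2`. -/
theorem pitman_closer_of_more_peaked
    {Ω : Type*} [MeasurableSpace Ω] (μ : Measure Ω) [IsProbabilityMeasure μ]
    (X Y : Ω → ℝ) (hXmeas : Measurable X) (hYmeas : Measurable Y)
    (hindep : IndepFun X Y μ) (θ : ℝ)
    -- symmetry about `θ`
    (hXsym : Measure.map (fun ω => X ω - θ) μ = Measure.map (fun ω => θ - X ω) μ)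
    (hYsym : Measure.map (fun ω => Y ω - θ) μ = Measure.map (fun ω => θ - Y ω) μ)
    -- absolute continuity
    (hXac : HasPDF X μ) (hYac : HasPDF Y μ)
    -- the support of `X` is contained in the support of `Y`
    (hsupp : measureSupport (Measure.map X μ) ⊆ measureSupport (Measure.map Y μ))
    -- `X` is more peaked about `θ` than `Y`
    (hpeak : ∀ t : ℝ, 0 ≤ t → μ {ω | |X ω - θ| ≤ t} ≥ μ {ω | |Y ω - θ| ≤ t}) :
    (μ {ω | |X ω - θ| < |Y ω - θ|}).toReal ≥ 1 / 2 :=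
  pitman_closer_of_more_peaked_general μ X Y hXmeas hYmeas hindep θ hYac hpeak
end

section
/- Let X₁ and X₂ be independent and identically distributed absolutely continuous real-valued random variables, symmetrically distributed about θ. Then for every ω with 0 ≤ ω < 1, P(|(X₁ + X₂)/2 − θ| ≤ |ωX₁ + (1 − ω)X₂ − θ|) ≥ 1/2; that is, the average (X₁ + X₂)/2 is the Pitman closest estimator of θ within the class of convex combinations ωX₁ + (1 − ω)X₂ with 0 ≤ ω < 1. -/
open MeasureTheory ProbabilityTheory
open scoped ENNReal

/-- Let `X₁` and `X₂` be i.i.d. absolutely continuous real random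
variables, each symmetric about `θ`.  Then for every `0 ≤ ω < 1`,
`P(|(X₁ + X₂)/2 - θ| ≤ |ωX₁ + (1 - ω)X₂ - θ|) ≥ 1/2`: the average `(X₁ + X₂)/2` is the
Pitman closest estimator of `θ` within the class of convex combinations. -/
theorem average_pitman_closest_among_convex_combinations
    {Ω : Type*} [MeasurableSpace Ω] (μ : Measure Ω) [IsProbabilityMeasure μ]
    (X₁ X₂ : Ω → ℝ) (hX₁meas : Measurable X₁) (hX₂meas : Measurable X₂)
    (hindep : IndepFun X₁ X₂ μ)
    -- identically distributed
    (hident : Measure.map X₁ μ = Measure.map X₂ μ) (θ : ℝ)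
    -- symmetry about `θ`
    (hsym : Measure.map (fun ω => X₁ ω - θ) μ = Measure.map (fun ω => θ - X₁ ω) μ)
    -- absolute continuity
    (hac : HasPDF X₁ μ) :
    ∀ w : ℝ, 0 ≤ w → w < 1 →
      (μ {ω | |(X₁ ω + X₂ ω) / 2 - θ| ≤ |w * X₁ ω + (1 - w) * X₂ ω - θ|}).toReal
        ≥ 1 / 2 := by
  intro w hw0 hw1
  set S : Set (ℝ × ℝ) := {p | |(p.1 + p.2) / 2 - θ| ≤ |w * p.1 + (1 - w) * p.2 - θ|} with hS
  have hSmeas : MeasurableSet S := measurableSet_le (by fun_prop) (by fun_prop)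
  have hpair : Measurable fun ω => (X₁ ω, X₂ ω) := hX₁meas.prodMk hX₂meas
  have hpair' : Measurable fun ω => (X₂ ω, X₁ ω) := hX₂meas.prodMk hX₁meas
  have hmapeq : μ.map (fun ω => (X₁ ω, X₂ ω)) = μ.map (fun ω => (X₂ ω, X₁ ω)) := by
    rw [(indepFun_iff_map_prod_eq_prod_map_map hX₁meas.aemeasurable
          hX₂meas.aemeasurable).mp hindep,
        (indepFun_iff_map_prod_eq_prod_map_map hX₂meas.aemeasurable
          hX₁meas.aemeasurable).mp hindep.symm, hident]
  have hE : μ ((fun ω => (X₁ ω, X₂ ω)) ⁻¹' S) = μ ((fun ω => (X₂ ω, X₁ ω)) ⁻¹' S) := by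
    rw [← Measure.map_apply hpair hSmeas, ← Measure.map_apply hpair' hSmeas, hmapeq]
  have hunion : (fun ω => (X₁ ω, X₂ ω)) ⁻¹' S ∪ (fun ω => (X₂ ω, X₁ ω)) ⁻¹' S
      = Set.univ := by
    ext ω
    simp only [Set.mem_union, Set.mem_preimage, hS, Set.mem_setOf_eq, Set.mem_univ, iff_true]
    by_contra h
    push_neg at h
    obtain ⟨h1, h2⟩ := h
    rw [add_comm (X₂ ω)] at h2
    have hsum : w * X₁ ω + (1 - w) * X₂ ω - θ + (w * X₂ ω + (1 - w) * X₁ ω - θ)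
        = 2 * ((X₁ ω + X₂ ω) / 2 - θ) := by ring
    have h3 := abs_add_le (w * X₁ ω + (1 - w) * X₂ ω - θ) (w * X₂ ω + (1 - w) * X₁ ω - θ)
    rw [hsum, abs_mul, abs_two] at h3
    linarith
  have h1 : (1 : ℝ≥0∞) ≤ 2 * μ ((fun ω => (X₁ ω, X₂ ω)) ⁻¹' S) := by
    have hle := measure_union_le (μ := μ) ((fun ω => (X₁ ω, X₂ ω)) ⁻¹' S)
      ((fun ω => (X₂ ω, X₁ ω)) ⁻¹' S)
    rw [hunion, measure_univ, ← hE, ← two_mul] at hle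
    exact hle
  have hfin : μ ((fun ω => (X₁ ω, X₂ ω)) ⁻¹' S) ≠ ⊤ := measure_ne_top μ _
  have h2 : (1 : ℝ) ≤ 2 * (μ ((fun ω => (X₁ ω, X₂ ω)) ⁻¹' S)).toReal := by
    have := ENNReal.toReal_mono (by finiteness) h1
    rwa [ENNReal.toReal_one, ENNReal.toReal_mul, ENNReal.toReal_ofNat] at this
  have hset : {ω | |(X₁ ω + X₂ ω) / 2 - θ| ≤ |w * X₁ ω + (1 - w) * X₂ ω - θ|}
      = (fun ω => (X₁ ω, X₂ ω)) ⁻¹' S := rfl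
  rw [hset]
  linarith
end

section
/- Let G be a continuous cdf on ℝ with a pdf, symmetric about 0 (i.e., G(−t) = 1 − G(t) for all t). Let Z₁ and Z₂ be independent random variables each with cdf G, and for σ₁, σ₂ > 0 set X = θ + σ₁Z₁ and Y = θ + σ₂Z₂, so X and Y belong to the location-scale family generated by G with common location θ. If σ₁ < σ₂, then X is Pitman closer to θ than Y, i.e., P(|X − θ| < |Y − θ|) ≥ 1/2. -/
open MeasureTheory ProbabilityTheory

/-! Since `σ₁ < σ₂`, the event `|σ₁ Z₁| < |σ₂ Z₂|` contains `|Z₁| ≤ |Z₂|` up to the null event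
`Z₂ = 0`. As `Z₁, Z₂` are i.i.d., the events `|Z₁| ≤ |Z₂|` and `|Z₂| ≤ |Z₁|` have the same
probability and together cover everything, so each has probability at least `1/2`. -/

lemma half_le_measureReal_prod_self_le {α : Type*} [MeasurableSpace α] (ν : Measure α)
    [IsProbabilityMeasure ν] {f : α → ℝ} (hf : Measurable f) :
    1 / 2 ≤ (ν.prod ν).real {p | f p.1 ≤ f p.2} := by
  set T : Set (α × α) := {p | f p.1 ≤ f p.2}
  have hT : MeasurableSet T := measurableSet_le (by fun_prop) (by fun_prop)
  have hswap : Prod.swap ⁻¹' Tᶜ ⊆ T := fun p (hp : ¬f p.2 ≤ f p.1) => (not_le.mp hp).le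
  have hcompl : (ν.prod ν).real Tᶜ ≤ (ν.prod ν).real T :=
    calc (ν.prod ν).real Tᶜ = (ν.prod ν).real (Prod.swap ⁻¹' Tᶜ) :=
          (Measure.measurePreserving_swap.measureReal_preimage hT.compl.nullMeasurableSet).symm
      _ ≤ (ν.prod ν).real T := measureReal_mono hswap
  have hsum := measureReal_add_measureReal_compl (μ := ν.prod ν) hT
  rw [probReal_univ] at hsum
  linarith

lemma measure_prod_abs_le_le_measure_prod_abs_mul_lt (μ : Measure ℝ) {ν : Measure ℝ}
    [SFinite ν] (hν : ν {0} = 0) {σ₁ σ₂ : ℝ} (hσ₁ : 0 < σ₁) (hσ : σ₁ < σ₂) :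
    (μ.prod ν) {p | |p.1| ≤ |p.2|} ≤ (μ.prod ν) {p | |σ₁ * p.1| < |σ₂ * p.2|} := by
  have hnull : (μ.prod ν) (Set.univ ×ˢ {0}) = 0 := by
    rw [Measure.prod_prod, hν, mul_zero]
  refine measure_mono_ae ((measure_eq_zero_iff_ae_notMem.mp hnull).mono ?_)
  rintro ⟨x, y⟩ hy (hxy : |x| ≤ |y|)
  have hy : 0 < |y| := abs_pos.mpr (by simpa using hy)
  show |σ₁ * x| < |σ₂ * y|
  rw [abs_mul, abs_mul, abs_of_pos hσ₁, abs_of_pos (hσ₁.trans hσ)]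
  calc σ₁ * |x| ≤ σ₁ * |y| := mul_le_mul_of_nonneg_left hxy hσ₁.le
    _ < σ₂ * |y| := mul_lt_mul_of_pos_right hσ hy

lemma ProbabilityTheory.IndepFun.measure_preimage_prodMk {Ω α β : Type*} [MeasurableSpace Ω]
    [MeasurableSpace α] [MeasurableSpace β] {μ : Measure Ω} [IsFiniteMeasure μ] {X : Ω → α}
    {Y : Ω → β} (hX : Measurable X) (hY : Measurable Y) (hXY : IndepFun X Y μ)
    {s : Set (α × β)} (hs : MeasurableSet s) :
    μ ((fun ω => (X ω, Y ω)) ⁻¹' s) = ((μ.map X).prod (μ.map Y)) s := by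
  rw [← Measure.map_apply (hX.prodMk hY) hs,
    (indepFun_iff_map_prod_eq_prod_map_map hX.aemeasurable hY.aemeasurable).mp hXY]

theorem pitman_closer_location_scale_general
    {Ω : Type*} [MeasurableSpace Ω] (μ : Measure Ω) [IsProbabilityMeasure μ]
    (ν : Measure ℝ) [IsProbabilityMeasure ν]
    -- `ν` has a pdf and cdf `G`, with `G` continuous and symmetric about `0`
    (gd : ℝ → ℝ) (hpdf : ν = volume.withDensity (fun x => ENNReal.ofReal (gd x)))
    -- `Z₁, Z₂` independent, each with distribution `ν`
    (Z₁ Z₂ : Ω → ℝ) (hZ₁meas : Measurable Z₁) (hZ₂meas : Measurable Z₂)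
    (hindep : IndepFun Z₁ Z₂ μ)
    (hZ₁ : Measure.map Z₁ μ = ν) (hZ₂ : Measure.map Z₂ μ = ν)
    (θ σ₁ σ₂ : ℝ) (hσ₁ : 0 < σ₁) (hσ : σ₁ < σ₂) :
    (μ {ω | |(θ + σ₁ * Z₁ ω) - θ| < |(θ + σ₂ * Z₂ ω) - θ|}).toReal ≥ 1 / 2 := by
  have hν0 : ν {0} = 0 := hpdf ▸ withDensity_absolutelyContinuous _ _ (measure_singleton 0)
  have hlaw : μ {ω | |(θ + σ₁ * Z₁ ω) - θ| < |(θ + σ₂ * Z₂ ω) - θ|}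
      = ((μ.map Z₁).prod (μ.map Z₂)) {p | |σ₁ * p.1| < |σ₂ * p.2|} := by
    simp only [add_sub_cancel_left]
    exact hindep.measure_preimage_prodMk hZ₁meas hZ₂meas
      (s := {p | |σ₁ * p.1| < |σ₂ * p.2|}) (measurableSet_lt (by fun_prop) (by fun_prop))
  rw [hlaw, hZ₁, hZ₂, ← measureReal_def]
  calc 1 / 2 ≤ (ν.prod ν).real {p | |p.1| ≤ |p.2|} :=
        half_le_measureReal_prod_self_le ν measurable_id.abs
    _ ≤ (ν.prod ν).real {p | |σ₁ * p.1| < |σ₂ * p.2|} :=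
        ENNReal.toReal_mono (measure_ne_top _ _)
          (measure_prod_abs_le_le_measure_prod_abs_mul_lt ν hν0 hσ₁ hσ)

/-- Lemma 7, location-scale families.  Let `G` be a continuous cdf
on `ℝ` with a pdf, symmetric about `0` (`G(-t) = 1 - G(t)`), the cdf of a probability
measure `ν`.  Let `Z₁, Z₂` be independent with distribution `ν`, and for `σ₁, σ₂ > 0`
set `X = θ + σ₁ Z₁`, `Y = θ + σ₂ Z₂`.  If `σ₁ < σ₂` then `X` is Pitman closer to `θ`
than `Y`. -/
theorem pitman_closer_location_scale
    {Ω : Type*} [MeasurableSpace Ω] (μ : Measure Ω) [IsProbabilityMeasure μ]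
    (ν : Measure ℝ) [IsProbabilityMeasure ν]
    -- `ν` has a pdf and cdf `G`, with `G` continuous and symmetric about `0`
    (gd : ℝ → ℝ) (hpdf : ν = volume.withDensity (fun x => ENNReal.ofReal (gd x)))
    (G : ℝ → ℝ) (hG : ∀ t, G t = (ν (Set.Iic t)).toReal)
    (hGcont : Continuous G) (hGsym : ∀ t, G (-t) = 1 - G t)
    -- `Z₁, Z₂` independent, each with distribution `ν`
    (Z₁ Z₂ : Ω → ℝ) (hZ₁meas : Measurable Z₁) (hZ₂meas : Measurable Z₂)
    (hindep : IndepFun Z₁ Z₂ μ)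
    (hZ₁ : Measure.map Z₁ μ = ν) (hZ₂ : Measure.map Z₂ μ = ν)
    (θ σ₁ σ₂ : ℝ) (hσ₁ : 0 < σ₁) (hσ₂ : 0 < σ₂) (hσ : σ₁ < σ₂) :
    (μ {ω | |(θ + σ₁ * Z₁ ω) - θ| < |(θ + σ₂ * Z₂ ω) - θ|}).toReal ≥ 1 / 2 :=
  pitman_closer_location_scale_general μ ν gd hpdf Z₁ Z₂ hZ₁meas hZ₂meas hindep hZ₁ hZ₂ θ σ₁ σ₂ hσ₁
    hσ
end

section
/- Let X₁, …, Xₙ be i.i.d. N(θ, σ²) random variables and Y₁, …, Yₙ be i.i.d. N(θ, kσ²) random variables with k > 0, with the two samples independent of each other. Let a₁, …, aₙ, b₁, …, bₙ > 0 satisfy Σᵢ aᵢ = Σᵢ bᵢ = 1. If k > (Σᵢ aᵢ²)/(Σᵢ bᵢ²), then Σᵢ aᵢXᵢ is Pitman closer to θ than Σᵢ bᵢYᵢ, i.e., P(|Σᵢ aᵢXᵢ − θ| < |Σᵢ bᵢYᵢ − θ|) ≥ 1/2. In particular, the sample mean X̄ = (1/n)Σᵢ Xᵢ is Pitman closer to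 θ than Ȳ = (1/n)Σᵢ Yᵢ whenever k > 1. -/
/-!
Centre everything at `θ`. By independence and the stability of Gaussians under independent
sums, `U = Σ aᵢXᵢ - θ ~ N(0, s)` and `V = Σ bᵢYᵢ - θ ~ N(0, t)` are independent, with
`s = v Σ aᵢ² ≤ t = k v Σ bᵢ²`. Writing `V = c V'` with `c = √(t/s) ≥ 1` and `V'` an independent
copy of `U`, the event `|U| < |V|` contains `|U| < |V'|`. By exchangeability the latter has the
same probability as `|V'| < |U|`, and ties `|U| = |V'|` are null, so it has probability `1/2`.
-/

open MeasureTheory ProbabilityTheory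
open scoped ENNReal NNReal

lemma sum_sq_pos_of_sum_ne_zero {ι R : Type*} [Ring R] [LinearOrder R] [IsStrictOrderedRing R]
    {s : Finset ι} {a : ι → R} (h : ∑ i ∈ s, a i ≠ 0) :
    0 < ∑ i ∈ s, a i ^ 2 := by
  refine (Finset.sum_nonneg fun i _ ↦ sq_nonneg (a i)).lt_of_ne fun h0 ↦ h ?_
  have hzero := (Finset.sum_eq_zero_iff_of_nonneg fun i _ ↦ sq_nonneg (a i)).mp h0.symm
  exact Finset.sum_eq_zero fun i hi ↦ pow_eq_zero_iff two_ne_zero |>.mp (hzero i hi)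

namespace ProbabilityTheory

variable {Ω : Type*} [MeasurableSpace Ω] {μ : Measure Ω}

def PitmanCloser (μ : Measure Ω) (θ : ℝ) (U V : Ω → ℝ) : Prop :=
  1 / 2 ≤ μ.real {ω | |U ω - θ| < |V ω - θ|}

section GaussianSums

variable {ι : Type*} {Z : ι → Ω → ℝ} {m : ι → ℝ} {v : ι → ℝ≥0}

lemma iIndepFun.map_finsetSum_eq_gaussianReal (hZ : iIndepFun Z μ)
    (hmeas : ∀ i, Measurable (Z i)) (hlaw : ∀ i, μ.map (Z i) = gaussianReal (m i) (v i))
    (s : Finset ι) :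
    μ.map (∑ i ∈ s, Z i) = gaussianReal (∑ i ∈ s, m i) (∑ i ∈ s, v i) := by
  have := hZ.isProbabilityMeasure
  induction s using Finset.cons_induction with
  | empty =>
    rw [Finset.sum_empty, Finset.sum_empty, Finset.sum_empty, gaussianReal_zero_var]
    exact (Measure.map_const μ (0 : ℝ)).trans (by simp)
  | cons a s ha ih =>
    rw [Finset.sum_cons, Finset.sum_cons, Finset.sum_cons, add_comm (m a), add_comm (v a),
      add_comm (Z a)]
    exact gaussianReal_add_gaussianReal_of_indepFun
      (hZ.indepFun_finsetSum_of_notMem hmeas ha) ih (hlaw a)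

lemma iIndepFun.map_weightedSum_eq_gaussianReal (hZ : iIndepFun Z μ)
    (hmeas : ∀ i, Measurable (Z i)) (hlaw : ∀ i, μ.map (Z i) = gaussianReal (m i) (v i))
    (c : ι → ℝ) (s : Finset ι) :
    μ.map (fun ω ↦ ∑ i ∈ s, c i * Z i ω) =
      gaussianReal (∑ i ∈ s, c i * m i) (∑ i ∈ s, NNReal.mk (c i ^ 2) (sq_nonneg _) * v i) := by
  have hcZ : iIndepFun (fun i ↦ (c i * ·) ∘ Z i) μ :=
    hZ.comp _ fun i ↦ measurable_const_mul (c i)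
  convert hcZ.map_finsetSum_eq_gaussianReal (fun i ↦ (hmeas i).const_mul (c i))
    (fun i ↦ by rw [← Measure.map_map (measurable_const_mul _) (hmeas i), hlaw,
      gaussianReal_map_const_mul]) s using 2
  ext ω
  simp [Finset.sum_apply]

end GaussianSums

lemma iIndepFun.indepFun_sumElim {ι κ β : Type*} [Fintype ι] [Fintype κ] [MeasurableSpace β]
    {X : ι → Ω → β} {Y : κ → Ω → β} (h : iIndepFun (Sum.elim X Y) μ)
    (hX : ∀ i, Measurable (X i)) (hY : ∀ j, Measurable (Y j)) :
    IndepFun (fun ω i ↦ X i ω) (fun ω j ↦ Y j ω) μ := by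
  let S : Finset (ι ⊕ κ) := Finset.univ.map .inl
  let T : Finset (ι ⊕ κ) := Finset.univ.map .inr
  have hST : Disjoint S T := by simp [S, T, Finset.disjoint_left]
  have hXY : ∀ k, Measurable (Sum.elim X Y k) := by rintro (i | j) <;> simp [hX, hY]
  exact (h.indepFun_finset S T hST hXY).comp
    (φ := fun p i ↦ p ⟨.inl i, by simp [S]⟩) (ψ := fun p j ↦ p ⟨.inr j, by simp [T]⟩)
    (measurable_pi_lambda _ fun _ ↦ measurable_pi_apply _)
    (measurable_pi_lambda _ fun _ ↦ measurable_pi_apply _)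

lemma measure_prod_self_abs_eq_abs (ν : Measure ℝ) [SFinite ν] [NullSingletonClass ν] :
    (ν.prod ν) {p | |p.1| = |p.2|} = 0 := by
  refine (Measure.measure_prod_null
    (measurableSet_eq_fun measurable_fst.abs measurable_snd.abs)).2 (ae_of_all _ fun x ↦ ?_)
  refine Set.Finite.measure_zero ((Set.toFinite {x, -x}).subset fun y hy ↦ ?_) ν
  rcases abs_eq_abs.mp (Eq.symm hy) with h | h
  exacts [Or.inl h, Or.inr h]

lemma half_le_measure_prod_self_abs_lt (ν : Measure ℝ) [IsProbabilityMeasure ν]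
    [NullSingletonClass ν] :
    1 / 2 ≤ (ν.prod ν) {p | |p.1| < |p.2|} := by
  have hswap : (ν.prod ν) {p | |p.2| < |p.1|} = (ν.prod ν) {p | |p.1| < |p.2|} := by
    conv_lhs => rw [← Measure.prod_swap]
    rw [Measure.map_apply measurable_swap
      (measurableSet_lt measurable_snd.abs measurable_fst.abs)]
    rfl
  have hcover : Set.univ ⊆
      {p : ℝ × ℝ | |p.1| < |p.2|} ∪ {p | |p.2| < |p.1|} ∪ {p | |p.1| = |p.2|} :=
    fun p _ ↦ by rcases lt_trichotomy |p.1| |p.2| with h | h | h <;> simp [h]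
  refine ENNReal.div_le_of_le_mul ?_
  calc (1 : ℝ≥0∞) = (ν.prod ν) Set.univ := measure_univ.symm
    _ ≤ (ν.prod ν) {p | |p.1| < |p.2|} + (ν.prod ν) {p | |p.2| < |p.1|}
          + (ν.prod ν) {p | |p.1| = |p.2|} :=
        (measure_mono hcover).trans <| (measure_union_le _ _).trans <| by
          gcongr; exact measure_union_le _ _
    _ = (ν.prod ν) {p | |p.1| < |p.2|} * 2 := by
        rw [hswap, measure_prod_self_abs_eq_abs, add_zero, mul_two]

lemma half_le_gaussianReal_prod_abs_lt {s t : ℝ≥0} (hs : s ≠ 0) (hst : s ≤ t) :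
    1 / 2 ≤ ((gaussianReal 0 s).prod (gaussianReal 0 t)) {p | |p.1| < |p.2|} := by
  have := nullSingletonClass_gaussianReal (μ := 0) hs
  set c := √(t / s : ℝ)
  have hc : 1 ≤ c := Real.one_le_sqrt.mpr <| (one_le_div (by positivity)).mpr (mod_cast hst)
  have hscale : (gaussianReal 0 s).map (c * ·) = gaussianReal 0 t := by
    rw [gaussianReal_map_const_mul, mul_zero]
    congr 1
    ext
    rw [NNReal.coe_mul, NNReal.coe_mk, Real.sq_sqrt (by positivity),
      div_mul_cancel₀ _ (NNReal.coe_ne_zero.mpr hs)]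
  rw [← hscale, ← Measure.map_id (μ := gaussianReal 0 s),
    Measure.map_prod_map _ _ measurable_id (measurable_const_mul c), Measure.map_id,
    Measure.map_apply (measurable_id.prodMap (measurable_const_mul c))
      (measurableSet_lt measurable_fst.abs measurable_snd.abs)]
  refine (half_le_measure_prod_self_abs_lt _).trans
    (measure_mono fun p (hp : |p.1| < |p.2|) ↦ ?_)
  simp only [Set.mem_preimage, Set.mem_ofPred_eq, Prod.map_fst, Prod.map_snd, id, abs_mul,
    abs_of_nonneg (zero_le_one.trans hc)]
  exact hp.trans_le (le_mul_of_one_le_left (abs_nonneg _) hc)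

lemma IndepFun.pitmanCloser_of_gaussianReal [IsFiniteMeasure μ] {U V : Ω → ℝ}
    (hUV : IndepFun U V μ) (hU : Measurable U) (hV : Measurable V) {θ : ℝ} {s t : ℝ≥0}
    (hs : s ≠ 0) (hst : s ≤ t) (hUlaw : μ.map U = gaussianReal θ s)
    (hVlaw : μ.map V = gaussianReal θ t) :
    PitmanCloser μ θ U V := by
  have hcenter {W : Ω → ℝ} {r : ℝ≥0} (hW : Measurable W) (hlaw : μ.map W = gaussianReal θ r) :
      μ.map (fun ω ↦ W ω - θ) = gaussianReal 0 r := by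
    rw [show (fun ω ↦ W ω - θ) = (· - θ) ∘ W from rfl,
      ← Measure.map_map (measurable_sub_const θ) hW, hlaw, gaussianReal_map_sub_const, sub_self]
  have hprod := (indepFun_iff_map_prod_eq_prod_map_map (hU.sub_const θ).aemeasurable
    (hV.sub_const θ).aemeasurable).mp (hUV.comp (measurable_sub_const θ) (measurable_sub_const θ))
  have hevent : μ {ω | |U ω - θ| < |V ω - θ|} =
      ((gaussianReal 0 s).prod (gaussianReal 0 t)) {p | |p.1| < |p.2|} := by
    rw [← hcenter hU hUlaw, ← hcenter hV hVlaw, ← hprod, Measure.map_apply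
      ((hU.sub_const θ).prodMk (hV.sub_const θ))
      (measurableSet_lt measurable_fst.abs measurable_snd.abs)]
    rfl
  have := ENNReal.toReal_mono (measure_ne_top μ _)
    (hevent ▸ half_le_gaussianReal_prod_abs_lt hs hst)
  rw [PitmanCloser, measureReal_def]
  simpa using this

theorem pitmanCloser_weightedSum_of_gaussianReal {ι : Type*} [Fintype ι] {X Y : ι → Ω → ℝ}
    (hX : ∀ i, Measurable (X i)) (hY : ∀ i, Measurable (Y i))
    (hindep : iIndepFun (Sum.elim X Y) μ) {θ : ℝ} {v k : ℝ≥0} (hv : v ≠ 0)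
    (hXlaw : ∀ i, μ.map (X i) = gaussianReal θ v)
    (hYlaw : ∀ i, μ.map (Y i) = gaussianReal θ (k * v))
    {a b : ι → ℝ} (ha : ∑ i, a i = 1) (hb : ∑ i, b i = 1)
    (hk : (∑ i, a i ^ 2) / (∑ i, b i ^ 2) < k) :
    PitmanCloser μ θ (fun ω ↦ ∑ i, a i * X i ω) (fun ω ↦ ∑ i, b i * Y i ω) := by
  have := hindep.isProbabilityMeasure
  have hsum_mul {c : ι → ℝ} (hc : ∑ i, c i = 1) : ∑ i, c i * θ = θ := by
    rw [← Finset.sum_mul, hc, one_mul]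
  have hU := (hindep.precomp Sum.inl_injective).map_weightedSum_eq_gaussianReal hX hXlaw a .univ
  have hV := (hindep.precomp Sum.inr_injective).map_weightedSum_eq_gaussianReal hY hYlaw b .univ
  rw [hsum_mul ha] at hU
  rw [hsum_mul hb] at hV
  have hUV := (hindep.indepFun_sumElim hX hY).comp
    (φ := fun x ↦ ∑ i, a i * x i) (ψ := fun y ↦ ∑ i, b i * y i) (by fun_prop) (by fun_prop)
  have ha2 := sum_sq_pos_of_sum_ne_zero (ha ▸ one_ne_zero)
  have hb2 := sum_sq_pos_of_sum_ne_zero (hb ▸ one_ne_zero)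
  refine hUV.pitmanCloser_of_gaussianReal (by fun_prop) (by fun_prop) ?_ ?_ hU hV
  · rw [← NNReal.coe_ne_zero]
    push_cast
    rw [← Finset.sum_mul]
    exact mul_ne_zero ha2.ne' (NNReal.coe_ne_zero.mpr hv)
  · rw [← NNReal.coe_le_coe]
    push_cast
    rw [← Finset.sum_mul, ← Finset.sum_mul, ← mul_assoc]
    gcongr
    exact ((div_lt_iff₀' hb2).mp hk).le

end ProbabilityTheory

theorem pitman_closer_gaussian_linear_combinations_general
    {Ω : Type*} [MeasurableSpace Ω] (μ : Measure Ω)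
    (n : ℕ) (hn : 0 < n)
    (X Y : Fin n → Ω → ℝ)
    (hXmeas : ∀ i, Measurable (X i)) (hYmeas : ∀ i, Measurable (Y i))
    -- the two samples together form an independent family
    (hindep : iIndepFun (Sum.elim X Y) μ)
    (θ : ℝ) (v k : ℝ≥0) (hv : 0 < v)
    -- `Xᵢ ~ N(θ, v)` and `Yᵢ ~ N(θ, k v)`
    (hXdist : ∀ i, Measure.map (X i) μ = gaussianReal θ v)
    (hYdist : ∀ i, Measure.map (Y i) μ = gaussianReal θ (k * v))
    (a b : Fin n → ℝ)
    (hasum : ∑ i, a i = 1) (hbsum : ∑ i, b i = 1) :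
    ((k : ℝ) > (∑ i, (a i) ^ 2) / (∑ i, (b i) ^ 2) →
        (μ {ω | |(∑ i, a i * X i ω) - θ| < |(∑ i, b i * Y i ω) - θ|}).toReal ≥ 1 / 2)
      ∧ ((1 : ℝ≥0) < k →
        (μ {ω | |(∑ i, X i ω) / n - θ| < |(∑ i, Y i ω) / n - θ|}).toReal ≥ 1 / 2) := by
  refine ⟨fun hk ↦ pitmanCloser_weightedSum_of_gaussianReal hXmeas hYmeas hindep hv.ne'
    hXdist hYdist hasum hbsum hk, fun hk ↦ ?_⟩
  have hmean : ∑ _i : Fin n, (n : ℝ)⁻¹ = 1 := by simp [hn.ne']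
  have hratio : (∑ _i : Fin n, ((n : ℝ)⁻¹) ^ 2) / (∑ _i : Fin n, ((n : ℝ)⁻¹) ^ 2) < k := by
    rw [div_self (sum_sq_pos_of_sum_ne_zero (hmean ▸ one_ne_zero)).ne']
    exact_mod_cast hk
  have hmeans := pitmanCloser_weightedSum_of_gaussianReal hXmeas hYmeas hindep hv.ne'
    hXdist hYdist hmean hmean hratio
  simp only [PitmanCloser, inv_mul_eq_div, ← Finset.sum_div] at hmeans
  exact hmeans

/-- Example 6, normal samples.  Let `X₁, …, Xₙ` be i.i.d.
`N(θ, σ²)` and `Y₁, …, Yₙ` be i.i.d. `N(θ, kσ²)` with `k > 0`, all `2n` variables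
independent.  Let `aᵢ, bᵢ > 0` with `Σ aᵢ = Σ bᵢ = 1`.  If `k > (Σ aᵢ²)/(Σ bᵢ²)` then
`Σ aᵢ Xᵢ` is Pitman closer to `θ` than `Σ bᵢ Yᵢ`; in particular, the sample mean `X̄`
is Pitman closer to `θ` than `Ȳ` whenever `k > 1`. -/
theorem pitman_closer_gaussian_linear_combinations
    {Ω : Type*} [MeasurableSpace Ω] (μ : Measure Ω) [IsProbabilityMeasure μ]
    (n : ℕ) (hn : 0 < n)
    (X Y : Fin n → Ω → ℝ)
    (hXmeas : ∀ i, Measurable (X i)) (hYmeas : ∀ i, Measurable (Y i))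
    -- the two samples together form an independent family
    (hindep : iIndepFun (Sum.elim X Y) μ)
    (θ : ℝ) (v k : ℝ≥0) (hv : 0 < v) (hk : 0 < k)
    -- `Xᵢ ~ N(θ, v)` and `Yᵢ ~ N(θ, k v)`
    (hXdist : ∀ i, Measure.map (X i) μ = gaussianReal θ v)
    (hYdist : ∀ i, Measure.map (Y i) μ = gaussianReal θ (k * v))
    (a b : Fin n → ℝ) (hapos : ∀ i, 0 < a i) (hbpos : ∀ i, 0 < b i)
    (hasum : ∑ i, a i = 1) (hbsum : ∑ i, b i = 1) :
    ((k : ℝ) > (∑ i, (a i) ^ 2) / (∑ i, (b i) ^ 2) →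
        (μ {ω | |(∑ i, a i * X i ω) - θ| < |(∑ i, b i * Y i ω) - θ|}).toReal ≥ 1 / 2)
      ∧ ((1 : ℝ≥0) < k →
        (μ {ω | |(∑ i, X i ω) / n - θ| < |(∑ i, Y i ω) / n - θ|}).toReal ≥ 1 / 2) :=
  pitman_closer_gaussian_linear_combinations_general μ n hn X Y hXmeas hYmeas hindep θ v k hv hXdist
    hYdist a b hasum hbsum
end

section
/- Let X₁, …, Xₙ be an i.i.d. sample from an absolutely continuous distribution symmetric about θ, with order statistics X_{1:n} ≤ ⋯ ≤ X_{n:n}, and let Y be an absolutely continuous random variable symmetric about θ with the same support, independent of the sample. Then the Pitman closeness probabilities π_{i:n} = P(|X_{i:n} − θ| < |Y − θ|) satisfy the symmetry property π_{i:n} = π_{n−i+1:n} for every i = 1, …, n. -/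
/-!
The reflection `t ↦ 2θ - t` maps each of `Y, X₁, …, Xₙ` to a copy of itself in law, so by
independence it preserves the joint law of `(Y, X₁, …, Xₙ)`. It preserves `|· - θ|` and reverses
the order of the sample, sending `X_{i:n}` to `2θ - X_{n-i+1:n}`; hence it maps the event
`|X_{n-i+1:n} - θ| < |Y - θ|` onto `|X_{i:n} - θ| < |Y - θ|`, and the two have equal probability.
-/

open MeasureTheory ProbabilityTheory
open scoped ENNReal

/-- The `i`-th order statistic (1-based) of the tuple `x : Fin n → ℝ`:
the `i`-th smallest value among `x 0, …, x (n-1)` (junk value `0` if `i - 1 ≥ n`). -/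
noncomputable def orderStat {n : ℕ} (x : Fin n → ℝ) (i : ℕ) : ℝ :=
  if h : i - 1 < n then x (Tuple.sort x ⟨i - 1, h⟩) else 0

section OrderStatistics

variable {n : ℕ}

lemma orderStat_const_sub (c : ℝ) (x : Fin n → ℝ) {i : ℕ} (hi : 1 ≤ i) (hin : i ≤ n) :
    orderStat (fun j => c - x j) i = c - orderStat x (n - i + 1) := by
  have hi' : i - 1 < n := by omega
  have hi'' : n - i + 1 - 1 < n := by omega
  -- running backwards through the permutation sorting `x` sorts `c - x`
  have hsorted : (fun j => c - x j) ∘ (Fin.revPerm.trans (Tuple.sort x))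
      = (fun j => c - x j) ∘ Tuple.sort (fun j => c - x j) :=
    Tuple.comp_sort_eq_comp_iff_monotone.mpr fun a b hab =>
      sub_le_sub_left (Tuple.monotone_sort x (Fin.rev_le_rev.mpr hab)) c
  have hrev : Fin.rev ⟨i - 1, hi'⟩ = (⟨n - i + 1 - 1, hi''⟩ : Fin n) := by
    ext
    simp only [Fin.val_rev]
    omega
  have hentry := congrFun hsorted ⟨i - 1, hi'⟩
  simp only [Function.comp_apply, Equiv.trans_apply, Fin.revPerm_apply, hrev] at hentry
  simp only [orderStat, dif_pos hi', dif_pos hi'']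
  exact hentry.symm

lemma measurableSet_setOf_sort_eq (σ : Equiv.Perm (Fin n)) :
    MeasurableSet {x : Fin n → ℝ | Tuple.sort x = σ} := by
  simp_rw [eq_comm (a := Tuple.sort _), Tuple.eq_sort_iff, Monotone, Function.comp_apply]
  exact Measurable.setOf (by fun_prop)

@[fun_prop]
lemma measurable_orderStat (i : ℕ) : Measurable fun x : Fin n → ℝ => orderStat x i := by
  let _ : MeasurableSpace (Equiv.Perm (Fin n)) := ⊤
  have hsort : Measurable (Tuple.sort : (Fin n → ℝ) → Equiv.Perm (Fin n)) :=
    measurable_to_countable' measurableSet_setOf_sort_eq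
  unfold orderStat
  split_ifs with hi
  · exact (measurable_from_prod_countable_left (f := fun p : (Fin n → ℝ) × Equiv.Perm (Fin n) =>
      p.1 (p.2 ⟨i - 1, hi⟩)) fun σ => measurable_pi_apply (σ ⟨i - 1, hi⟩)).comp
        (measurable_id.prodMk hsort)
  · exact measurable_const

end OrderStatistics

section Reflection

variable {Ω : Type*} [MeasurableSpace Ω] {μ : Measure Ω}

lemma ProbabilityTheory.iIndepFun.identDistrib_comp {ι β : Type*} [Fintype ι]
    [MeasurableSpace β] {Z : ι → Ω → β} (hind : iIndepFun Z μ) (hZ : ∀ i, Measurable (Z i))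
    {φ : ι → β → β} (hφ : ∀ i, Measurable (φ i))
    (h : ∀ i, IdentDistrib (fun ω => φ i (Z i ω)) (Z i) μ μ) :
    IdentDistrib (fun ω i => φ i (Z i ω)) (fun ω i => Z i ω) μ μ where
  aemeasurable_fst := (measurable_pi_lambda _ fun i => (hφ i).comp (hZ i)).aemeasurable
  aemeasurable_snd := (measurable_pi_lambda _ hZ).aemeasurable
  map_eq := by
    refine ((hind.comp φ hφ).map_fun_eq_pi_map
      fun i => ((hφ i).comp (hZ i)).aemeasurable).trans ?_
    rw [hind.map_fun_eq_pi_map fun i => (hZ i).aemeasurable]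
    exact congrArg Measure.pi (funext fun i => (h i).map_eq)

lemma identDistrib_two_mul_sub_self {Z : Ω → ℝ} (hZ : Measurable Z) {θ : ℝ}
    (h : μ.map (fun ω => Z ω - θ) = μ.map (fun ω => θ - Z ω)) :
    IdentDistrib (fun ω => 2 * θ - Z ω) Z μ μ := by
  have hsym : IdentDistrib (fun ω => θ - Z ω) (fun ω => Z ω - θ) μ μ :=
    ⟨by fun_prop, by fun_prop, h.symm⟩
  convert hsym.comp (measurable_const_add θ) using 1 <;> funext ω <;>
    simp only [Function.comp_apply] <;> ring

end Reflection

theorem pitman_closeness_order_statistic_symmetry_general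
    {Ω : Type*} [MeasurableSpace Ω] (μ : Measure Ω)
    (n : ℕ) (θ : ℝ)
    (ν : Measure ℝ)
    -- the sampling distribution is absolutely continuous with pdf `f`,
    -- symmetric about `θ`
    (hνsym : Measure.map (fun x => x - θ) ν = Measure.map (fun x => θ - x) ν)
    -- `Y` is absolutely continuous with pdf `g`, symmetric about `θ`
    (Y : Ω → ℝ) (hYmeas : Measurable Y)
    (hYsym : Measure.map (fun ω => Y ω - θ) μ = Measure.map (fun ω => θ - Y ω) μ)
    -- the i.i.d. sample, independent of `Y`
    (X : Fin n → Ω → ℝ) (hXmeas : ∀ i, Measurable (X i))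
    (hdist : ∀ i, Measure.map (X i) μ = ν)
    (hindep : iIndepFun
        (fun o : Option (Fin n) => o.elim Y X) μ) :
    ∀ i : ℕ, 1 ≤ i → i ≤ n →
      (μ {ω | |orderStat (fun j => X j ω) i - θ| < |Y ω - θ|}).toReal
        = (μ {ω | |orderStat (fun j => X j ω) (n - i + 1) - θ| < |Y ω - θ|}).toReal := by
  intro i hi hin
  have hZ : ∀ o : Option (Fin n), Measurable (o.elim Y X) := by
    rintro (_ | j)
    exacts [hYmeas, hXmeas j]
  have hZsym : ∀ o : Option (Fin n),
      IdentDistrib (fun ω => 2 * θ - o.elim Y X ω) (o.elim Y X) μ μ := by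
    rintro (_ | j)
    · exact identDistrib_two_mul_sub_self hYmeas hYsym
    · refine identDistrib_two_mul_sub_self (hXmeas j) ?_
      rw [← hdist j, Measure.map_map (measurable_sub_const θ) (hXmeas j),
        Measure.map_map (measurable_const_sub θ) (hXmeas j)] at hνsym
      exact hνsym
  have hreflect := hindep.identDistrib_comp hZ (fun _ => measurable_const_sub (2 * θ)) hZsym
  set B := {v : Option (Fin n) → ℝ | |orderStat (fun j => v (some j)) i - θ| < |v none - θ|}
  have hB : MeasurableSet B := measurableSet_lt (by fun_prop) (by fun_prop)
  have habs : ∀ a : ℝ, |2 * θ - a - θ| = |a - θ| := fun a => by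
    rw [← abs_neg]
    ring_nf
  have hpre : (fun ω o => 2 * θ - o.elim Y X ω) ⁻¹' B
      = {ω | |orderStat (fun j => X j ω) (n - i + 1) - θ| < |Y ω - θ|} := by
    ext ω
    simp only [B, Set.mem_preimage, Set.mem_ofPred_eq, Option.elim,
      orderStat_const_sub (2 * θ) _ hi hin, habs]
  have hπ := hreflect.measure_mem_eq hB
  rw [hpre] at hπ
  exact congrArg ENNReal.toReal hπ.symm

/-- Lemma 9, symmetry property.  Let `X₁, …, Xₙ` be an i.i.d.
sample from an absolutely continuous distribution symmetric about `θ`, and let `Y` be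
absolutely continuous, symmetric about `θ`, with the same support, independent of the
sample.  Then the Pitman closeness probabilities
`π_{i:n} = P(|X_{i:n} - θ| < |Y - θ|)` satisfy `π_{i:n} = π_{n-i+1:n}` for
`i = 1, …, n`. -/
theorem pitman_closeness_order_statistic_symmetry
    {Ω : Type*} [MeasurableSpace Ω] (μ : Measure Ω) [IsProbabilityMeasure μ]
    (n : ℕ) (hn : 0 < n) (θ : ℝ)
    (ν : Measure ℝ) [IsProbabilityMeasure ν]
    -- the sampling distribution is absolutely continuous with pdf `f`,
    -- symmetric about `θ`
    (f : ℝ → ℝ) (hf : ν = volume.withDensity (fun x => ENNReal.ofReal (f x)))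
    (hνsym : Measure.map (fun x => x - θ) ν = Measure.map (fun x => θ - x) ν)
    -- `Y` is absolutely continuous with pdf `g`, symmetric about `θ`
    (Y : Ω → ℝ) (hYmeas : Measurable Y) (g : ℝ → ℝ)
    (hg : Measure.map Y μ = volume.withDensity (fun x => ENNReal.ofReal (g x)))
    (hYsym : Measure.map (fun ω => Y ω - θ) μ = Measure.map (fun ω => θ - Y ω) μ)
    -- `Y` and `X₁` have the same support
    (hsupp : {x : ℝ | 0 < f x} = {x : ℝ | 0 < g x})
    -- the i.i.d. sample, independent of `Y`
    (X : Fin n → Ω → ℝ) (hXmeas : ∀ i, Measurable (X i))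
    (hdist : ∀ i, Measure.map (X i) μ = ν)
    (hindep : iIndepFun
        (fun o : Option (Fin n) => o.elim Y X) μ) :
    ∀ i : ℕ, 1 ≤ i → i ≤ n →
      (μ {ω | |orderStat (fun j => X j ω) i - θ| < |Y ω - θ|}).toReal
        = (μ {ω | |orderStat (fun j => X j ω) (n - i + 1) - θ| < |Y ω - θ|}).toReal :=
  pitman_closeness_order_statistic_symmetry_general μ n θ ν hνsym Y hYmeas hYsym X hXmeas hdist
    hindep
end
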